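/- Let i < j be positive integers, let c_i, c_j ∈ (0,∞), and let R_i, R_j : (0,∞) → (0,∞) be functions with R_i(t) → ∞, R_j(t) → ∞, t^i R_i(t)^d f(R_i(t))^i → c_i, and t^j R_j(t)^d f(R_j(t))^j → c_j as t → ∞. Then R_j(t)/R_i(t) → 0 as t → ∞. -/

import Mathlib

open MeasureTheory Filter Topology

noncomputable section

/-- Euclidean space `ℝ^d`. -/
abbrev Euc (d : ℕ) : Type := EuclideanSpace ℝ (Fin d)

/-- Safe access to the `i`-th entry of a finite tuple of points (junk value `0` out of range). -/
def vget {d n : ℕ} (z : Fin n → Euc d) (i : ℕ) : Euc d :=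
  if h : i < n then z ⟨i, h⟩ else 0

/-- The `k`-tuple `(0, z₁, …, z_{k-1})`. -/
def padFirst {d : ℕ} (k : ℕ) {n : ℕ} (z : Fin n → Euc d) : Fin k → Euc d :=
  fun j => if (j : ℕ) = 0 then 0 else vget z ((j : ℕ) - 1)

/-- The `k`-tuple `(0, z₁, …, z_{ℓ-1}, z_k, …, z_{2k-ℓ-1})`. -/
def padSecond {d : ℕ} (k ℓ : ℕ) {n : ℕ} (z : Fin n → Euc d) : Fin k → Euc d :=
  fun j => if (j : ℕ) = 0 then 0
    else if (j : ℕ) < ℓ then vget z ((j : ℕ) - 1)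
    else vget z ((j : ℕ) + k - ℓ - 1)

/-- The sub-tuple `(y₁, …, y_k)` of a `(2k-ℓ)`-tuple `y`. -/
def sel1 {d : ℕ} (k : ℕ) {n : ℕ} (y : Fin n → Euc d) : Fin k → Euc d :=
  fun i => vget y (i : ℕ)

/-- The sub-tuple `(y₁, …, y_ℓ, y_{k+1}, …, y_{2k-ℓ})` of a `(2k-ℓ)`-tuple `y`. -/
def sel2 {d : ℕ} (k ℓ : ℕ) {n : ℕ} (y : Fin n → Euc d) : Fin k → Euc d :=
  fun i => if (i : ℕ) < ℓ then vget y (i : ℕ) else vget y ((i : ℕ) + (k - ℓ))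

/-- The surface area `s_{d-1}` of the unit sphere in `ℝ^d`. -/
def sArea (d : ℕ) : ℝ := d * (volume (Metric.ball (0 : Euc d) 1)).toReal

open Set in
private lemma rpow_neg_anti {a b α : ℝ} (ha : 0 < a) (hab : a ≤ b) (hα : 0 ≤ α) :
    b ^ (-α) ≤ a ^ (-α) := by
  rw [Real.rpow_neg ha.le, Real.rpow_neg (ha.trans_le hab).le]
  exact inv_anti₀ (Real.rpow_pos_of_pos ha _) (Real.rpow_le_rpow ha.le hab hα)

open Set in
private lemma exists_good_point {w η : ℝ} (hw : 0 < w) (hη : 0 ≤ η)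
    (hηs : η * (1 + 3*w/2) < 3*w/4)
    {A B : Set ℝ}
    (hA : volume (Icc (w/2) (2*w) \ A) ≤ ENNReal.ofReal η)
    (hB : volume (Icc (1/2 : ℝ) 2 \ B) ≤ ENNReal.ofReal η)
    {c : ℝ} (hc : c ∈ Icc (3*w/4) (3*w/2)) :
    ∃ u, u ∈ A ∧ u / c ∈ B := by
  obtain ⟨hc1, hc2⟩ := hc
  have hcpos : 0 < c := by linarith
  by_contra hcon
  push_neg at hcon
  have hK : Icc (3*w/4) (3*w/2) ⊆
      (Icc (w/2) (2*w) \ A) ∪ ((fun u => c⁻¹ * u) ⁻¹' (Icc (1/2 : ℝ) 2 \ B)) := by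
    intro u hu
    obtain ⟨hu1, hu2⟩ := hu
    have huI : u ∈ Icc (w/2) (2*w) := ⟨by linarith, by linarith⟩
    have hdiv : c⁻¹ * u ∈ Icc (1/2 : ℝ) 2 := by
      constructor
      · rw [le_inv_mul_iff₀ hcpos]; linarith
      · rw [inv_mul_le_iff₀ hcpos]; linarith
    by_cases hA' : u ∈ A
    · refine Or.inr ⟨hdiv, ?_⟩
      have := hcon u hA'
      rwa [div_eq_inv_mul] at this
    · exact Or.inl ⟨huI, hA'⟩
  have hmK : volume (Icc (3*w/4) (3*w/2)) = ENNReal.ofReal (3*w/4) := by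
    rw [Real.volume_Icc]; ring_nf
  have hpre : volume ((fun u => c⁻¹ * u) ⁻¹' (Icc (1/2 : ℝ) 2 \ B))
      ≤ ENNReal.ofReal (3*w/2 * η) := by
    rw [Real.volume_preimage_mul_left (inv_ne_zero hcpos.ne'), inv_inv,
      abs_of_pos hcpos]
    calc ENNReal.ofReal c * volume (Icc (1/2 : ℝ) 2 \ B)
        ≤ ENNReal.ofReal (3*w/2) * ENNReal.ofReal η :=
          mul_le_mul' (ENNReal.ofReal_le_ofReal hc2) hB
      _ = ENNReal.ofReal (3*w/2 * η) := by
          rw [← ENNReal.ofReal_mul (by linarith)]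
  have hle : ENNReal.ofReal (3*w/4) ≤ ENNReal.ofReal (η + 3*w/2 * η) := by
    rw [← hmK]
    refine le_trans (measure_mono hK) (le_trans (measure_union_le _ _) ?_)
    rw [ENNReal.ofReal_add hη (by positivity)]
    exact add_le_add hA hpre
  have := (ENNReal.ofReal_le_ofReal_iff (by positivity)).1 hle
  nlinarith

open Set in
private lemma seq_uct {f : ℝ → ℝ} {α : ℝ} (hα : 0 < α) (hfm : Measurable f)
    (hfpos : ∀ᶠ r in atTop, 0 < f r)
    (hfreg : ∀ r : ℝ, 0 < r → Tendsto (fun t => f (t * r) / f t) atTop (𝓝 (r ^ (-α))))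
    (x s : ℕ → ℝ) (hx : Tendsto x atTop atTop) {w : ℝ} (hw : 0 < w)
    (hs : Tendsto s atTop (𝓝 w)) :
    Tendsto (fun n => f (x n * s n) / f (x n)) atTop (𝓝 (w ^ (-α))) := by
  classical
  have hy : Tendsto (fun n => x n * s n) atTop atTop := by
    have := Tendsto.pos_mul_atTop hw hs hx
    simpa [mul_comm] using this
  set glim : ℝ → ℝ := fun r => r ^ (-α) with hglim_def
  have hglim_m : StronglyMeasurable glim := by
    have : Measurable glim := by fun_prop
    exact this.stronglyMeasurable
  set g : ℕ → ℝ → ℝ := fun n r => f (x n * r) / f (x n) with hg_def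
  set h : ℕ → ℝ → ℝ := fun n r => f (x n * s n * r) / f (x n * s n) with hh_def
  have hgm : ∀ n, StronglyMeasurable (g n) := fun n =>
    ((hfm.comp (measurable_const_mul (x n))).div_const _).stronglyMeasurable
  have hhm : ∀ n, StronglyMeasurable (h n) := fun n =>
    ((hfm.comp (measurable_const_mul (x n * s n))).div_const _).stronglyMeasurable
  set η : ℝ := (3*w/4) / (2*(1 + 3*w/2)) with hη_def
  have hηpos : 0 < η := by positivity
  have hηs : η * (1 + 3*w/2) < 3*w/4 := by
    rw [hη_def, div_mul_eq_mul_div, div_lt_iff₀ (by positivity)]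
    nlinarith
  have hIA : volume (Icc (w/2) (2*w)) ≠ ⊤ := by
    rw [Real.volume_Icc]; exact ENNReal.ofReal_ne_top
  have hIB : volume (Icc (1/2 : ℝ) 2) ≠ ⊤ := by
    rw [Real.volume_Icc]; exact ENNReal.ofReal_ne_top
  obtain ⟨tA, htAs, htAmeas, htAm, hUA⟩ :=
    tendstoUniformlyOn_of_ae_tendsto (μ := volume) hgm hglim_m measurableSet_Icc hIA
      (ae_of_all _ (fun r hr => by
        refine (hfreg r ?_).comp hx
        have := hr.1; linarith)) hηpos
  obtain ⟨tB, htBs, htBmeas, htBm, hUB⟩ :=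
    tendstoUniformlyOn_of_ae_tendsto (μ := volume) hhm hglim_m measurableSet_Icc hIB
      (ae_of_all _ (fun r hr => by
        refine (hfreg r ?_).comp hy
        have := hr.1; linarith)) hηpos
  set A : Set ℝ := Icc (w/2) (2*w) \ tA with hA_def
  set B : Set ℝ := Icc (1/2 : ℝ) 2 \ tB with hB_def
  have hAsub : A ⊆ Icc (w/2) (2*w) := diff_subset
  have hBsub : B ⊆ Icc (1/2 : ℝ) 2 := diff_subset
  have hAme : volume (Icc (w/2) (2*w) \ A) ≤ ENNReal.ofReal η := by
    refine le_trans (measure_mono ?_) htAm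
    rw [hA_def, diff_diff_right_self]
    exact inter_subset_right
  have hBme : volume (Icc (1/2 : ℝ) 2 \ B) ≤ ENNReal.ofReal η := by
    refine le_trans (measure_mono ?_) htBm
    rw [hB_def, diff_diff_right_self]
    exact inter_subset_right
  -- the eventual good points
  have hsK : ∀ᶠ n in atTop, s n ∈ Icc (3*w/4) (3*w/2) :=
    hs (Icc_mem_nhds (by linarith) (by linarith))
  set P : ℕ → Prop := fun n => ∃ u, u ∈ A ∧ u / s n ∈ B with hP_def
  have hP : ∀ᶠ n in atTop, P n :=
    hsK.mono fun n hn => exists_good_point hw hηpos.le hηs hAme hBme hn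
  set u : ℕ → ℝ := fun n => if h : P n then h.choose else w with hu_def
  have huA : ∀ᶠ n in atTop, u n ∈ A ∧ u n / s n ∈ B := by
    filter_upwards [hP] with n hn
    simp only [hu_def, dif_pos hn]
    exact hn.choose_spec
  -- error sequences
  set eA : ℕ → ℝ := fun n => g n (u n) - glim (u n) with heA_def
  set eB : ℕ → ℝ := fun n => h n (u n / s n) - glim (u n / s n) with heB_def
  have heA : Tendsto eA atTop (𝓝 0) := by
    rw [NormedAddCommGroup.tendsto_nhds_zero]
    intro ε hε
    filter_upwards [Metric.tendstoUniformlyOn_iff.1 hUA ε hε, huA] with n h1 h2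
    have := h1 (u n) ⟨hAsub h2.1, h2.1.2⟩
    rw [Real.dist_eq, abs_sub_comm] at this
    simpa [heA_def] using this
  have heB : Tendsto eB atTop (𝓝 0) := by
    rw [NormedAddCommGroup.tendsto_nhds_zero]
    intro ε hε
    filter_upwards [Metric.tendstoUniformlyOn_iff.1 hUB ε hε, huA] with n h1 h2
    have := h1 (u n / s n) ⟨hBsub h2.2, h2.2.2⟩
    rw [Real.dist_eq, abs_sub_comm] at this
    simpa [heB_def] using this
  -- positivity thresholds
  obtain ⟨M, hM⟩ := eventually_atTop.1 hfpos
  have hxM : ∀ᶠ n in atTop, max M 1 ≤ x n := hx (eventually_ge_atTop _)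
  have hyM : ∀ᶠ n in atTop, max M 1 ≤ x n * s n := hy (eventually_ge_atTop _)
  have hxuM : ∀ᶠ n in atTop, M ≤ x n * u n := by
    have hx2 : ∀ᶠ n in atTop, 2 * max M 1 / w ≤ x n := hx (eventually_ge_atTop _)
    filter_upwards [hx2, huA] with n h1 h2
    have hu1 : w/2 ≤ u n := (hAsub h2.1).1
    have hxpos : 0 ≤ x n := le_trans (by positivity) h1
    calc M ≤ max M 1 := le_max_left _ _
      _ = (2 * max M 1 / w) * (w/2) := by field_simp
      _ ≤ x n * u n := mul_le_mul h1 hu1 (by positivity) hxpos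
  -- the key identity
  have hkey : ∀ᶠ n in atTop,
      f (x n * s n) / f (x n) - (s n) ^ (-α) =
        (eA n - (s n) ^ (-α) * eB n) / (eB n + glim (u n / s n)) := by
    filter_upwards [huA, hsK, hxM, hyM, hxuM] with n h2 hsn hxn hyn hxun
    have hspos : 0 < s n := by have := hsn.1; linarith
    have hupos : 0 < u n := by have := (hAsub h2.1).1; linarith
    have hfx : 0 < f (x n) := hM _ (le_trans (le_max_left _ _) hxn)
    have hfy : 0 < f (x n * s n) := hM _ (le_trans (le_max_left _ _) hyn)
    have hfxu : 0 < f (x n * u n) := hM _ hxun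
    have hprod : x n * s n * (u n / s n) = x n * u n := by
      field_simp
    have hsplit : (u n) ^ (-α) = (s n) ^ (-α) * (u n / s n) ^ (-α) := by
      rw [← Real.mul_rpow hspos.le (by positivity)]
      congr 1
      field_simp
    have hgl : glim (u n / s n) = (u n / s n) ^ (-α) := rfl
    have hglu : glim (u n) = (u n) ^ (-α) := rfl
    have h1 : eB n + glim (u n / s n) = f (x n * u n) / f (x n * s n) := by
      simp only [heB_def, hh_def, hprod, hgl]
      ring
    rw [h1, eq_div_iff (div_pos hfxu hfy).ne']
    simp only [heA_def, heB_def, hg_def, hh_def, hprod, hgl, hglu, hsplit]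
    field_simp
    ring
  -- lower bound on the denominator
  have hglB : ∀ᶠ n in atTop, (2:ℝ) ^ (-α) ≤ glim (u n / s n) := by
    filter_upwards [huA] with n h2
    have hv := hBsub h2.2
    have hvpos : 0 < u n / s n := lt_of_lt_of_le (by norm_num) hv.1
    exact rpow_neg_anti hvpos hv.2 hα.le
  -- squeeze
  have hsrpow : Tendsto (fun n => (s n) ^ (-α)) atTop (𝓝 (w ^ (-α))) :=
    hs.rpow_const (Or.inl hw.ne')
  have hsbdd : ∀ᶠ n in atTop, (s n) ^ (-α) ≤ w ^ (-α) + 1 :=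
    hsrpow.eventually (eventually_le_nhds (by linarith))
  have heBsmall : ∀ᶠ n in atTop, |eB n| ≤ (2:ℝ) ^ (-α) / 2 := by
    have h2 : (0:ℝ) < (2:ℝ) ^ (-α) / 2 := by positivity
    exact (heB.eventually (eventually_abs_sub_lt 0 h2)).mono fun n hn => by
      simpa using hn.le
  have hT1 : Tendsto (fun n => f (x n * s n) / f (x n) - (s n) ^ (-α)) atTop (𝓝 0) := by
    have hq : Tendsto (fun n => (|eA n| + (w ^ (-α) + 1) * |eB n|) / ((2:ℝ) ^ (-α) / 2))
        atTop (𝓝 0) := by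
      have : Tendsto (fun n => |eA n| + (w ^ (-α) + 1) * |eB n|) atTop (𝓝 0) := by
        have h1 : Tendsto (fun n => |eA n|) atTop (𝓝 0) := by
          simpa using heA.abs
        have h2 : Tendsto (fun n => |eB n|) atTop (𝓝 0) := by
          simpa using heB.abs
        simpa using h1.add (h2.const_mul (w ^ (-α) + 1))
      simpa using this.div_const ((2:ℝ) ^ (-α) / 2)
    refine squeeze_zero_norm' ?_ hq
    filter_upwards [hkey, hsbdd, heBsmall, hglB, hsK] with n hkeyn hsb hebs hgb hsn
    rw [hkeyn]
    have hspos : 0 < s n := by have := hsn.1; linarith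
    have hsa : 0 ≤ (s n) ^ (-α) := Real.rpow_nonneg hspos.le _
    have hden : (2:ℝ) ^ (-α) / 2 ≤ eB n + glim (u n / s n) := by
      have := abs_le.1 hebs
      linarith
    have hdenpos : 0 < eB n + glim (u n / s n) := lt_of_lt_of_le (by positivity) hden
    rw [Real.norm_eq_abs, abs_div, abs_of_pos hdenpos]
    refine div_le_div₀ ?_ ?_ (by positivity) hden
    · positivity
    · calc |eA n - (s n) ^ (-α) * eB n| ≤ |eA n| + |(s n) ^ (-α) * eB n| := abs_sub _ _
        _ = |eA n| + (s n) ^ (-α) * |eB n| := by rw [abs_mul, abs_of_nonneg hsa]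
        _ ≤ |eA n| + (w ^ (-α) + 1) * |eB n| := by
            have := abs_nonneg (eB n)
            nlinarith
  have := hT1.add hsrpow
  rw [zero_add] at this
  refine this.congr fun n => ?_
  ring

open Set in
private lemma uct {f : ℝ → ℝ} {α : ℝ} (hα : 0 < α) (hfm : Measurable f)
    (hfpos : ∀ᶠ r in atTop, 0 < f r)
    (hfreg : ∀ r : ℝ, 0 < r → Tendsto (fun t => f (t * r) / f t) atTop (𝓝 (r ^ (-α))))
    {δ : ℝ} (hδ : 0 < δ) :
    ∃ T : ℝ, 1 ≤ T ∧ ∀ t, T ≤ t → ∀ l ∈ Icc (1:ℝ) 2, f (t * l) ≤ (l ^ (-α) + δ) * f t := by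
  by_contra hcon
  push_neg at hcon
  have hsel : ∀ n : ℕ, ∃ q : ℝ × ℝ, (max 1 (n:ℝ)) ≤ q.1 ∧ q.2 ∈ Icc (1:ℝ) 2 ∧
      (q.2 ^ (-α) + δ) * f q.1 < f (q.1 * q.2) := by
    intro n
    obtain ⟨t, ht, l, hl, hlt⟩ := hcon (max 1 (n:ℝ)) (le_max_left _ _)
    exact ⟨(t, l), ht, hl, hlt⟩
  choose q hq1 hq2 hq3 using hsel
  set t : ℕ → ℝ := fun n => (q n).1 with ht_def
  set l : ℕ → ℝ := fun n => (q n).2 with hl_def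
  have ht : Tendsto t atTop atTop :=
    tendsto_atTop_mono (fun n => le_trans (le_max_right _ _) (hq1 n))
      tendsto_natCast_atTop_atTop
  obtain ⟨w, hwmem, φ, hφ, hlw⟩ := tendsto_subseq_of_bounded (Metric.isBounded_Icc _ _) (fun n => hq2 n)
  rw [isClosed_Icc.closure_eq] at hwmem
  have hw : 0 < w := lt_of_lt_of_le one_pos hwmem.1
  have happ := seq_uct hα hfm hfpos hfreg (t ∘ φ) (l ∘ φ)
    (ht.comp hφ.tendsto_atTop) hw hlw
  have hl2 : Tendsto (fun n => (l (φ n)) ^ (-α)) atTop (𝓝 (w ^ (-α))) :=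
    hlw.rpow_const (Or.inl hw.ne')
  have hdiff : Tendsto (fun n => f (t (φ n) * l (φ n)) / f (t (φ n)) - (l (φ n)) ^ (-α))
      atTop (𝓝 0) := by
    have := happ.sub hl2
    rwa [sub_self] at this
  have hsmall : ∀ᶠ n in atTop,
      f (t (φ n) * l (φ n)) / f (t (φ n)) - (l (φ n)) ^ (-α) < δ :=
    hdiff.eventually (gt_mem_nhds hδ)
  obtain ⟨M, hM⟩ := eventually_atTop.1 hfpos
  have hMev : ∀ᶠ n in atTop, M ≤ t (φ n) := (ht.comp hφ.tendsto_atTop) (eventually_ge_atTop _)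
  obtain ⟨n, h1, h2⟩ := (hsmall.and hMev).exists
  have hft : 0 < f (t (φ n)) := hM _ h2
  have h4 := (lt_div_iff₀ hft).2 (hq3 (φ n))
  linarith

open Set in
private lemma potter {f : ℝ → ℝ} {α : ℝ} (hα : 0 < α) (hfm : Measurable f)
    (hfnn : ∀ r, 0 ≤ f r)
    (hfpos : ∀ᶠ r in atTop, 0 < f r)
    (hfreg : ∀ r : ℝ, 0 < r → Tendsto (fun t => f (t * r) / f t) atTop (𝓝 (r ^ (-α))))
    {β : ℝ} (hβ : 0 < β) (hβα : β < α) :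
    ∃ C : ℝ, 0 < C ∧ ∃ T : ℝ, 1 ≤ T ∧
      ∀ t, T ≤ t → ∀ p, 1 ≤ p → f (t * p) ≤ C * p ^ (-β) * f t := by
  set δ : ℝ := (2:ℝ) ^ (-β) - (2:ℝ) ^ (-α) with hδ_def
  have hδ : 0 < δ := by
    rw [hδ_def, sub_pos]
    exact (Real.rpow_lt_rpow_left_iff one_lt_two).2 (by linarith)
  obtain ⟨T₀, hT₀1, hUCT⟩ := uct hα hfm hfpos hfreg hδ
  set C : ℝ := (1 + δ) * (2:ℝ) ^ β with hC_def
  have h2β : (1:ℝ) ≤ (2:ℝ) ^ β := by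
    rw [show (1:ℝ) = (2:ℝ) ^ (0:ℝ) by simp]
    exact (Real.rpow_le_rpow_left_iff one_lt_two).2 hβ.le
  have hC1 : 1 ≤ C := by nlinarith
  have hC : 0 < C := by linarith
  refine ⟨C, hC, T₀, hT₀1, ?_⟩
  have hstep : ∀ t, T₀ ≤ t → f (t * 2) ≤ (2:ℝ) ^ (-β) * f t := by
    intro t htT
    have := hUCT t htT 2 ⟨one_le_two, le_refl _⟩
    rw [hδ_def] at this
    calc f (t * 2) ≤ ((2:ℝ) ^ (-α) + ((2:ℝ) ^ (-β) - (2:ℝ) ^ (-α))) * f t := this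
      _ = (2:ℝ) ^ (-β) * f t := by ring
  have hmain : ∀ m : ℕ, ∀ p : ℝ, 1 ≤ p → p ≤ 2 ^ m → ∀ t, T₀ ≤ t →
      f (t * p) ≤ C * p ^ (-β) * f t := by
    intro m
    induction m with
    | zero =>
      intro p hp1 hp2 t htT
      simp only [pow_zero] at hp2
      have hpe : p = 1 := le_antisymm hp2 hp1
      subst hpe
      rw [mul_one, Real.one_rpow, mul_one]
      nlinarith [hfnn t]
    | succ m ih =>
      intro p hp1 hp2 t htT
      have htpos : 0 < t := lt_of_lt_of_le one_pos hT₀1 |>.trans_le htT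
      by_cases hcase : p ≤ 2 ^ m
      · exact ih p hp1 hcase t htT
      · push_neg at hcase
        have h1m : (1:ℝ) ≤ 2 ^ m := one_le_pow₀ one_le_two
        by_cases hp2' : p ≤ 2
        · have := hUCT t htT p ⟨hp1, hp2'⟩
          have hppos : 0 < p := lt_of_lt_of_le one_pos hp1
          have hflr : p ^ (-α) ≤ 1 :=
            Real.rpow_le_one_of_one_le_of_nonpos hp1 (by linarith)
          have hfac : (2:ℝ) ^ β * p ^ (-β) ≥ 1 := by
            have h1 : (2:ℝ) ^ (-β) ≤ p ^ (-β) := rpow_neg_anti hppos hp2' hβ.le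
            have h2 : (2:ℝ) ^ β * (2:ℝ) ^ (-β) = 1 := by
              rw [← Real.rpow_add two_pos]; simp
            nlinarith [Real.rpow_pos_of_pos (two_pos (α := ℝ)) β]
          have hC' : 1 + δ ≤ C * p ^ (-β) := by
            rw [hC_def, mul_assoc]
            nlinarith
          calc f (t * p) ≤ (p ^ (-α) + δ) * f t := this
            _ ≤ (1 + δ) * f t := by nlinarith [hfnn t]
            _ ≤ C * p ^ (-β) * f t := by nlinarith [hfnn t]
        · push_neg at hp2'
          have hq1 : 1 ≤ p / 2 := by linarith
          have hq2 : p / 2 ≤ 2 ^ m := by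
            rw [div_le_iff₀ two_pos]
            rw [pow_succ] at hp2
            linarith
          have htq : T₀ ≤ t * (p / 2) :=
            le_trans htT (le_mul_of_one_le_right htpos.le hq1)
          have harg : t * (p / 2) * 2 = t * p := by ring
          have hqpos : 0 < p / 2 := by linarith
          calc f (t * p) = f (t * (p / 2) * 2) := by rw [harg]
            _ ≤ (2:ℝ) ^ (-β) * f (t * (p / 2)) := hstep _ htq
            _ ≤ (2:ℝ) ^ (-β) * (C * (p / 2) ^ (-β) * f t) := by
                have := ih (p / 2) hq1 hq2 t htT
                nlinarith [Real.rpow_pos_of_pos (two_pos (α := ℝ)) (-β)]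
            _ = C * p ^ (-β) * f t := by
                rw [Real.div_rpow (by linarith) two_pos.le]
                have h2ne : ((2:ℝ) ^ (-β)) ≠ 0 :=
                  (Real.rpow_pos_of_pos two_pos _).ne'
                field_simp
  intro t htT p hp1
  obtain ⟨m, hm⟩ := pow_unbounded_of_one_lt p (one_lt_two : (1:ℝ) < 2)
  exact hmain m p hp1 hm.le t htT


/-- the ordering `R_j ≪ R_i` of the layer radii (equation (1.1)). -/
theorem layer_radii_ordering
    (d : ℕ) (hd : 1 ≤ d) (α : ℝ) (hα : (d : ℝ) < α)
    (f : ℝ → ℝ) (hfm : Measurable f) (hfnn : ∀ r, 0 ≤ f r)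
    (hfprob : (∫ x : Euc d, f ‖x‖) = 1)
    (hfpos : ∀ᶠ r in atTop, 0 < f r)
    (hfreg : ∀ r : ℝ, 0 < r → Tendsto (fun t => f (t * r) / f t) atTop (𝓝 (r ^ (-α))))
    (i j : ℕ) (hi : 1 ≤ i) (hij : i < j)
    (ci cj : ℝ) (hci : 0 < ci) (hcj : 0 < cj)
    (Ri Rj : ℝ → ℝ)
    (hRipos : ∀ t : ℝ, 0 < t → 0 < Ri t) (hRjpos : ∀ t : ℝ, 0 < t → 0 < Rj t)
    (hRiinf : Tendsto Ri atTop atTop) (hRjinf : Tendsto Rj atTop atTop)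
    (hRi : Tendsto (fun t => t ^ i * Ri t ^ d * f (Ri t) ^ i) atTop (𝓝 ci))
    (hRj : Tendsto (fun t => t ^ j * Rj t ^ d * f (Rj t) ^ j) atTop (𝓝 cj)) :
    Tendsto (fun t => Rj t / Ri t) atTop (𝓝 0) := by
  have hd1 : (1:ℝ) ≤ (d:ℝ) := by exact_mod_cast hd
  have hα0 : 0 < α := by linarith
  have hiR : (1:ℝ) ≤ (i:ℝ) := by exact_mod_cast hi
  have hjR : (2:ℝ) ≤ (j:ℝ) := by exact_mod_cast (by omega : 2 ≤ j)
  have hjpos : (0:ℝ) < (j:ℝ) := by linarith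
  set β : ℝ := ((d:ℝ)/(j:ℝ) + α)/2 with hβ_def
  have hdj : (d:ℝ)/(j:ℝ) ≤ (d:ℝ) := div_le_self (by linarith) (by linarith)
  have hdjpos : 0 < (d:ℝ)/(j:ℝ) := div_pos (by linarith) hjpos
  have hβ1 : (d:ℝ)/(j:ℝ) < β := by rw [hβ_def]; linarith
  have hβpos : 0 < β := by linarith
  have hβα : β < α := by rw [hβ_def]; linarith
  obtain ⟨C, hC, T, hT1, hPotter⟩ := potter hα0 hfm hfnn hfpos hfreg hβpos hβα
  obtain ⟨M, hM⟩ := eventually_atTop.1 hfpos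
  by_contra hcon
  rw [Metric.tendsto_nhds] at hcon
  push_neg at hcon
  obtain ⟨ε, hε, hne⟩ := hcon
  have hfreq : ∃ᶠ t in atTop, ε ≤ |Rj t / Ri t| := by
    refine hne.mono fun t ht => ?_
    rw [Real.dist_0_eq_abs] at ht
    exact ht
  -- constants
  set K1 : ℝ := C * (ε ^ (-α) + 1) with hK1_def
  have hK1 : 0 < K1 := by
    have := Real.rpow_pos_of_pos hε (-α)
    positivity
  set K2 : ℝ := K1 * ε ^ β with hK2_def
  have hK2 : 0 < K2 := by
    have := Real.rpow_pos_of_pos hε β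
    positivity
  set e : ℝ := ((d*i : ℕ):ℝ) + (-β) * ((i*j : ℕ):ℝ) with he_def
  have he : e ≤ 0 := by
    rw [he_def]
    push_cast
    have h1 : (d:ℝ) < β * (j:ℝ) := by
      rw [div_lt_iff₀ hjpos] at hβ1
      linarith
    nlinarith
  set K3 : ℝ := K2 ^ (i*j) * ε ^ e with hK3_def
  -- the blow-up quantity
  set G : ℝ → ℝ := fun t =>
    (t ^ j * Rj t ^ d * f (Rj t) ^ j) ^ i / (t ^ i * Ri t ^ d * f (Ri t) ^ i) ^ j
      * Ri t ^ (d * (j - i)) with hG_def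
  have hGlim : Tendsto G atTop atTop := by
    have h1 : Tendsto (fun t =>
        (t ^ j * Rj t ^ d * f (Rj t) ^ j) ^ i / (t ^ i * Ri t ^ d * f (Ri t) ^ i) ^ j)
        atTop (𝓝 (cj ^ i / ci ^ j)) := (hRj.pow i).div (hRi.pow j) (by positivity)
    have h2 : Tendsto (fun t => Ri t ^ (d * (j - i))) atTop atTop :=
      (tendsto_pow_atTop (Nat.mul_ne_zero (by omega) (by omega))).comp hRiinf
    exact Tendsto.pos_mul_atTop (by positivity) h1 h2
  -- eventual facts
  have hratio : Tendsto (fun t => f (Ri t * ε) / f (Ri t)) atTop (𝓝 (ε ^ (-α))) :=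
    (hfreg ε hε).comp hRiinf
  have hev : ∀ᶠ t in atTop, (1:ℝ) ≤ t ∧ max T M ≤ Ri t ∧ T/ε ≤ Ri t ∧
      f (Ri t * ε) / f (Ri t) ≤ ε ^ (-α) + 1 ∧ K3 + 1 ≤ G t := by
    filter_upwards [eventually_ge_atTop (1:ℝ), hRiinf.eventually_ge_atTop (max T M),
      hRiinf.eventually_ge_atTop (T/ε),
      hratio.eventually (eventually_le_nhds (lt_add_one _)),
      hGlim.eventually_ge_atTop (K3+1)] with t p1 p2 p3 p4 p5
    exact ⟨p1, p2, p3, p4, p5⟩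
  obtain ⟨t, hst, h1t, hRiT, hRiTe, hfrac, hG⟩ := (hfreq.and_eventually hev).exists
  have htpos : (0:ℝ) < t := lt_of_lt_of_le one_pos h1t
  have hRip : 0 < Ri t := hRipos t htpos
  have hRjp : 0 < Rj t := hRjpos t htpos
  set st : ℝ := Rj t / Ri t with hst_def
  have hstpos : 0 < st := div_pos hRjp hRip
  have habs : ε ≤ st := by rwa [abs_of_pos hstpos] at hst
  have hfRi : 0 < f (Ri t) := hM _ (le_trans (le_max_right _ _) hRiT)
  -- Potter application
  have hbase : T ≤ Ri t * ε := (div_le_iff₀ hε).1 hRiTe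
  have hone : 1 ≤ st / ε := (one_le_div hε).2 habs
  have happ := hPotter (Ri t * ε) hbase (st / ε) hone
  have harg : Ri t * ε * (st / ε) = Rj t := by
    rw [hst_def]
    field_simp
  rw [harg] at happ
  have hfup : f (Ri t * ε) ≤ (ε ^ (-α) + 1) * f (Ri t) := by
    rw [div_le_iff₀ hfRi] at hfrac
    linarith
  have hXle : f (Rj t) / f (Ri t) ≤ K2 * st ^ (-β) := by
    have hsε : (st / ε) ^ (-β) = st ^ (-β) * ε ^ β := by
      rw [Real.div_rpow hstpos.le hε.le, Real.rpow_neg hε.le, div_eq_mul_inv, inv_inv]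
    have hrp : 0 < (st / ε) ^ (-β) := Real.rpow_pos_of_pos (by positivity) _
    have h5 : f (Rj t) ≤ C * (st / ε) ^ (-β) * ((ε ^ (-α) + 1) * f (Ri t)) := by
      calc f (Rj t) ≤ C * (st / ε) ^ (-β) * f (Ri t * ε) := happ
        _ ≤ C * (st / ε) ^ (-β) * ((ε ^ (-α) + 1) * f (Ri t)) := by
            exact mul_le_mul_of_nonneg_left hfup (by positivity)
    rw [div_le_iff₀ hfRi, hK2_def, hK1_def]
    calc f (Rj t) ≤ C * (st / ε) ^ (-β) * ((ε ^ (-α) + 1) * f (Ri t)) := h5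
      _ = C * (ε ^ (-α) + 1) * ε ^ β * st ^ (-β) * f (Ri t) := by
          rw [hsε]; ring
  -- rewrite G at t
  obtain ⟨k, hk, hjk⟩ : ∃ k, 1 ≤ k ∧ j = i + k := ⟨j - i, by omega, by omega⟩
  have hGeq : G t = st ^ (d*i) * (f (Rj t) / f (Ri t)) ^ (i*j) := by
    rw [hG_def, hst_def]
    subst hjk
    have h1 : i + k - i = k := by omega
    rw [h1]
    rw [div_pow, div_pow]
    field_simp
    ring
  -- final bound
  have hXnn : 0 ≤ f (Rj t) / f (Ri t) := div_nonneg (hfnn _) (hfnn _)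
  have hGle : G t ≤ K3 := by
    rw [hGeq]
    have hstep1 : (f (Rj t) / f (Ri t)) ^ (i*j) ≤ (K2 * st ^ (-β)) ^ (i*j) :=
      pow_le_pow_left₀ hXnn hXle _
    have hrpnn : (0:ℝ) ≤ st ^ (-β) := (Real.rpow_pos_of_pos hstpos _).le
    calc st ^ (d*i) * (f (Rj t) / f (Ri t)) ^ (i*j)
        ≤ st ^ (d*i) * (K2 * st ^ (-β)) ^ (i*j) := by
          exact mul_le_mul_of_nonneg_left hstep1 (by positivity)
      _ = K2 ^ (i*j) * (st ^ (d*i) * (st ^ (-β)) ^ (i*j)) := by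
          rw [mul_pow]; ring
      _ = K2 ^ (i*j) * st ^ e := by
          rw [he_def, ← Real.rpow_natCast st (d*i), ← Real.rpow_natCast (st ^ (-β)) (i*j),
            ← Real.rpow_mul hstpos.le, ← Real.rpow_add hstpos]
      _ ≤ K2 ^ (i*j) * ε ^ e := by
          have h6 : st ^ (-(-e)) ≤ ε ^ (-(-e)) := rpow_neg_anti hε habs (by linarith)
          rw [neg_neg] at h6
          exact mul_le_mul_of_nonneg_left h6 (by positivity)
      _ = K3 := by rw [hK3_def]
  linarith
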